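/- Suppose the sequence g^t = (β^t, z^t, u^t), with z^t ∈ Z_r for all t, satisfies the PPA variational inequality with a symmetric positive definite matrix H. Then for every t ≥ 1, ‖g^t − g^{t+1}‖_H² ≤ ‖g^{t−1} − g^t‖_H²; that is, the H-norm of successive differences is monotonically non-increasing. -/

import Mathlib

open Matrix Filter

noncomputable section

/-- Vectors in ℝ^p. -/
abbrev Vec (p : ℕ) := Fin p → ℝ

/-- Triples `g = (β, z, u) ∈ ℝ^p × ℝ^p × ℝ^p`. -/
abbrev Trip (p : ℕ) := Vec p × Vec p × Vec p

/-- Index type for ℝ^{3p}. -/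
abbrev Idx3 (p : ℕ) := Fin p ⊕ Fin p ⊕ Fin p

/-- Identify a triple `(β, z, u)` with a vector in ℝ^{3p}. -/
def toSum {p : ℕ} (g : Trip p) : Idx3 p → ℝ := Sum.elim g.1 (Sum.elim g.2.1 g.2.2)

/-- The operator `F(β, z, u) = (−Aᵀu, u, Aβ − z − c)`. -/
def Fop {p : ℕ} (A : Matrix (Fin p) (Fin p) ℝ) (c : Vec p) (g : Trip p) : Trip p :=
  (-(Aᵀ *ᵥ g.2.2), g.2.2, A *ᵥ g.1 - g.2.1 - c)

/-- Membership in the box `Z_r = {z : ‖z‖_∞ ≤ r}`. -/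
def inZ {p : ℕ} (r : ℝ) (z : Vec p) : Prop := ∀ j, |z j| ≤ r

/-- The ℓ₁ norm on ℝ^p. -/
def l1 {p : ℕ} (β : Vec p) : ℝ := ∑ j, |β j|

/-- The Euclidean inner product on ℝ^{3p}. -/
def ip {p : ℕ} (v w : Trip p) : ℝ := toSum v ⬝ᵥ toSum w

/-- The bilinear form `⟨v, H w⟩` on ℝ^{3p}; in particular `ipH H v v = ‖v‖_H²`. -/
def ipH {p : ℕ} (H : Matrix (Idx3 p) (Idx3 p) ℝ) (v w : Trip p) : ℝ :=
  toSum v ⬝ᵥ (H *ᵥ toSum w)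

/-- `g* = (β*, z*, u*)` is a saddle point: `z* ∈ Z_r` and
`‖β‖₁ − ‖β*‖₁ + ⟨g − g*, F(g*)⟩ ≥ 0` for all `g = (β, z, u)` with `z ∈ Z_r`. -/
def IsSaddle {p : ℕ} (A : Matrix (Fin p) (Fin p) ℝ) (c : Vec p) (r : ℝ)
    (gs : Trip p) : Prop :=
  inZ r gs.2.1 ∧ ∀ g : Trip p, inZ r g.2.1 →
    0 ≤ l1 g.1 - l1 gs.1 + ip (g - gs) (Fop A c gs)

/-- The sequence `g^t` satisfies the PPA variational inequality with matrix `H`: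
for every `t` and every `g = (β, z, u)` with `z ∈ Z_r`,
`‖β‖₁ − ‖β^{t+1}‖₁ + ⟨g − g^{t+1}, F(g^{t+1})⟩ ≥ ⟨g − g^{t+1}, H(g^t − g^{t+1})⟩`. -/
def SatisfiesPVI {p : ℕ} (A : Matrix (Fin p) (Fin p) ℝ) (c : Vec p) (r : ℝ)
    (H : Matrix (Idx3 p) (Idx3 p) ℝ) (g : ℕ → Trip p) : Prop :=
  ∀ t : ℕ, ∀ gg : Trip p, inZ r gg.2.1 →
    ipH H (gg - g (t + 1)) (g t - g (t + 1)) ≤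
      l1 gg.1 - l1 (g (t + 1)).1 + ip (gg - g (t + 1)) (Fop A c (g (t + 1)))

/-!
Write `a = g^t − g^{t+1}` and `b = g^{t−1} − g^t`. Adding the variational inequality at step `t − 1`
tested with `g^{t+1}` to the one at step `t` tested with `g^t`, the ℓ₁ terms cancel, and so do the
`F` terms because `F` is an affine map with skew-symmetric linear part. What remains is
`⟨a, H a⟩ ≤ ⟨a, H b⟩`, and positive semidefiniteness of `H` turns this into `⟨a, H a⟩ ≤ ⟨b, H b⟩`.
-/

theorem Matrix.PosSemidef.dotProduct_mulVec_self_le_of_le {n : Type*} [Fintype n]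
    {H : Matrix n n ℝ} (hH : H.PosSemidef) {x y : n → ℝ}
    (hxy : x ⬝ᵥ (H *ᵥ x) ≤ x ⬝ᵥ (H *ᵥ y)) :
    x ⬝ᵥ (H *ᵥ x) ≤ y ⬝ᵥ (H *ᵥ y) := by
  have hsymm : y ⬝ᵥ (H *ᵥ x) = x ⬝ᵥ (H *ᵥ y) := by
    rw [dotProduct_mulVec, ← mulVec_transpose, dotProduct_comm,
      ← conjTranspose_eq_transpose_of_trivial, hH.isHermitian.eq]
  have hnonneg : 0 ≤ (y - x) ⬝ᵥ (H *ᵥ (y - x)) := by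
    simpa using hH.dotProduct_mulVec_nonneg (y - x)
  simp only [mulVec_sub, dotProduct_sub, sub_dotProduct] at hnonneg
  linarith

section

variable {p : ℕ}

theorem toSum_sub (a b : Trip p) : toSum (a - b) = toSum a - toSum b := by
  funext i
  rcases i with i | i | i <;> rfl

theorem ip_eq_add_dotProduct (v w : Trip p) :
    ip v w = v.1 ⬝ᵥ w.1 + v.2.1 ⬝ᵥ w.2.1 + v.2.2 ⬝ᵥ w.2.2 := by
  simp [ip, toSum, dotProduct, Fintype.sum_sum_type, add_assoc]

theorem Fop_sub_Fop (A : Matrix (Fin p) (Fin p) ℝ) (c : Vec p) (a b : Trip p) :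
    Fop A c a - Fop A c b = Fop A 0 (a - b) := by
  simp only [Fop, Prod.mk_sub_mk, Prod.fst_sub, Prod.snd_sub, mulVec_sub, sub_zero, Prod.mk.injEq]
  refine ⟨by abel, trivial, by abel⟩

theorem ip_self_Fop_zero (A : Matrix (Fin p) (Fin p) ℝ) (v : Trip p) : ip v (Fop A 0 v) = 0 := by
  obtain ⟨β, z, u⟩ := v
  have hA : β ⬝ᵥ (Aᵀ *ᵥ u) = u ⬝ᵥ (A *ᵥ β) := by
    rw [dotProduct_mulVec, vecMul_transpose, dotProduct_comm]
  rw [ip_eq_add_dotProduct]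
  simp only [Fop, sub_zero, dotProduct_neg, dotProduct_sub, hA, dotProduct_comm z u]
  ring

theorem SatisfiesPVI.ipH_succ_le {A : Matrix (Fin p) (Fin p) ℝ} {c : Vec p} {r : ℝ}
    {H : Matrix (Idx3 p) (Idx3 p) ℝ} {g : ℕ → Trip p} (hPVI : SatisfiesPVI A c r H g)
    (hz : ∀ t, inZ r (g t).2.1) (t : ℕ) :
    ipH H (g (t + 1) - g (t + 2)) (g (t + 1) - g (t + 2)) ≤
      ipH H (g (t + 1) - g (t + 2)) (g t - g (t + 1)) := by
  have hprev := hPVI t (g (t + 2)) (hz (t + 2))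
  have hnext := hPVI (t + 1) (g (t + 1)) (hz (t + 1))
  have hskew := ip_self_Fop_zero A (g (t + 1) - g (t + 2))
  rw [← Fop_sub_Fop A c] at hskew
  simp only [ipH, ip, toSum_sub, mulVec_sub, dotProduct_sub, sub_dotProduct] at hprev hnext hskew ⊢
  linarith

end

theorem stmt13_general {p : ℕ} (A : Matrix (Fin p) (Fin p) ℝ) (c : Vec p) (r : ℝ)
    (H : Matrix (Idx3 p) (Idx3 p) ℝ) (hH : H.PosDef)
    (g : ℕ → Trip p) (hz : ∀ t, inZ r (g t).2.1)
    (hPVI : SatisfiesPVI A c r H g) :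
    ∀ t : ℕ, 1 ≤ t →
      ipH H (g t - g (t + 1)) (g t - g (t + 1)) ≤
        ipH H (g (t - 1) - g t) (g (t - 1) - g t) := by
  intro t ht
  obtain ⟨s, rfl⟩ := Nat.exists_eq_add_of_le' ht
  exact hH.posSemidef.dotProduct_mulVec_self_le_of_le (hPVI.ipH_succ_le hz s)

/-- The H-norm of successive differences is monotonically non-increasing:
for every `t ≥ 1`, `‖g^t − g^{t+1}‖_H² ≤ ‖g^{t−1} − g^t‖_H²`. -/
theorem stmt13 {p : ℕ} (A : Matrix (Fin p) (Fin p) ℝ) (c : Vec p) (r : ℝ) (hr : 0 ≤ r)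
    (H : Matrix (Idx3 p) (Idx3 p) ℝ) (hH : H.PosDef)
    (g : ℕ → Trip p) (hz : ∀ t, inZ r (g t).2.1)
    (hPVI : SatisfiesPVI A c r H g) :
    ∀ t : ℕ, 1 ≤ t →
      ipH H (g t - g (t + 1)) (g t - g (t + 1)) ≤
        ipH H (g (t - 1) - g t) (g (t - 1) - g t) :=
  stmt13_general A c r H hH g hz hPVI
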